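/- arXiv:2505.02531 — 2 statements merged into one kernel-verified Lean document; each statement's English description precedes it below -/
import Mathlib

section
/- Let V_h be a finite-dimensional subspace of L²(Ω) on which the inverse estimates ‖∇v_h‖ ≤ C_inv h⁻¹‖v_h‖ and the edge trace bound ‖v_h‖_{E_h}² ≤ C_tr h⁻¹‖v_h‖² hold. Let τ_K, τ_E > 0 satisfy τ_K (k/h² + |a|/h + s) ≤ 1 and τ_E ≤ c₄ τ_K/h. Then for every u_h ∈ V_h, the function v⁰ = τ_K P_h(a·∇u_h) satisfies k τ_K²‖∇v'‖² + s τ_K²‖v'‖² + τ_K³‖a·∇v'‖² + τ_E τ_K² k²‖[[∂_n v']]‖_{E_h}² ≤ C τ_K‖a·∇u_h‖², where v' = P_h(a·∇u_h). In particular |||v⁰||| ≤ C^{1/2}|||u_h|||. -/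
/-!
Every term is bounded by a multiple of `τK * ‖v'‖ ^ 2`. The parameter condition gives
`τK * k ≤ h ^ 2`, `τK * |a| ≤ h` and `τK * s ≤ 1`, which trade the coefficients `k` and `|a|`
for powers of `h`; these are absorbed by the inverse estimate in the form
`(h * ‖∇v'‖) ^ 2 ≤ Cinv ^ 2 * ‖v'‖ ^ 2` (for the jump term after the trace bound and
`τE ≤ c₄ τK / h`). Stability of the projection finally replaces `‖v'‖` by `‖a·∇u_h‖`.
-/

lemma stabilization_parameter_bounds {τ k na s h : ℝ} (hτ : 0 ≤ τ) (hk : 0 ≤ k) (hna : 0 ≤ na)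
    (hs : 0 ≤ s) (hh : 0 < h) (H : τ * (k / h ^ 2 + na / h + s) ≤ 1) :
    τ * k ≤ h ^ 2 ∧ τ * na ≤ h ∧ τ * s ≤ 1 := by
  have hdiff : 0 ≤ τ * (k / h ^ 2) := by positivity
  have hconv : 0 ≤ τ * (na / h) := by positivity
  have hreac : 0 ≤ τ * s := by positivity
  rw [mul_add, mul_add] at H
  refine ⟨?_, ?_, by linarith⟩
  · rw [← div_le_one (by positivity), mul_div_assoc]
    linarith
  · rw [← div_le_one hh, mul_div_assoc]
    linarith

lemma sq_mul_le_of_inverse_estimate {h g v Cinv : ℝ} (hh : 0 < h) (hg : 0 ≤ g)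
    (hinv : g ≤ Cinv / h * v) : (h * g) ^ 2 ≤ Cinv ^ 2 * v ^ 2 := by
  have hhg : h * g ≤ Cinv * v := by
    rwa [div_mul_eq_mul_div, le_div_iff₀' hh] at hinv
  rw [← mul_pow]
  exact pow_le_pow_left₀ (by positivity) hhg 2

section TermBounds

variable {τ h g v Cinv : ℝ}

lemma diffusion_term_le {k : ℝ} (hτ : 0 ≤ τ) (hτk : τ * k ≤ h ^ 2)
    (hgrad : (h * g) ^ 2 ≤ Cinv ^ 2 * v ^ 2) :
    k * τ ^ 2 * g ^ 2 ≤ Cinv ^ 2 * τ * v ^ 2 :=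
  calc k * τ ^ 2 * g ^ 2 = τ * ((τ * k) * g ^ 2) := by ring
    _ ≤ τ * (h ^ 2 * g ^ 2) := by gcongr
    _ = τ * (h * g) ^ 2 := by ring
    _ ≤ τ * (Cinv ^ 2 * v ^ 2) := by gcongr
    _ = Cinv ^ 2 * τ * v ^ 2 := by ring

lemma reaction_term_le {s : ℝ} (hτ : 0 ≤ τ) (hτs : τ * s ≤ 1) :
    s * τ ^ 2 * v ^ 2 ≤ τ * v ^ 2 :=
  calc s * τ ^ 2 * v ^ 2 = (τ * s) * (τ * v ^ 2) := by ring
    _ ≤ 1 * (τ * v ^ 2) := by gcongr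
    _ = τ * v ^ 2 := one_mul _

lemma convection_term_le {na c : ℝ} (hτ : 0 ≤ τ) (hg : 0 ≤ g) (hc : 0 ≤ c)
    (hconv : c ≤ na * g) (hτa : τ * na ≤ h) (hgrad : (h * g) ^ 2 ≤ Cinv ^ 2 * v ^ 2) :
    τ ^ 3 * c ^ 2 ≤ Cinv ^ 2 * τ * v ^ 2 := by
  have hτc : τ * c ≤ h * g :=
    calc τ * c ≤ τ * (na * g) := by gcongr
      _ = (τ * na) * g := by ring
      _ ≤ h * g := by gcongr
  calc τ ^ 3 * c ^ 2 = τ * (τ * c) ^ 2 := by ring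
    _ ≤ τ * (h * g) ^ 2 := by gcongr
    _ ≤ τ * (Cinv ^ 2 * v ^ 2) := by gcongr
    _ = Cinv ^ 2 * τ * v ^ 2 := by ring

lemma jump_term_le {k τE c₄ Ctr j : ℝ} (hτ : 0 ≤ τ) (hk : 0 ≤ k) (hh : 0 < h)
    (hc₄ : 0 ≤ c₄) (hCtr : 0 ≤ Ctr) (hτE : τE ≤ c₄ * τ / h) (hτk : τ * k ≤ h ^ 2)
    (hjump : j ^ 2 ≤ Ctr / h * g ^ 2) (hgrad : (h * g) ^ 2 ≤ Cinv ^ 2 * v ^ 2) :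
    τE * τ ^ 2 * k ^ 2 * j ^ 2 ≤ c₄ * Ctr * Cinv ^ 2 * τ * v ^ 2 :=
  calc τE * τ ^ 2 * k ^ 2 * j ^ 2 = τE * ((τ * k) ^ 2 * j ^ 2) := by ring
    _ ≤ c₄ * τ / h * ((τ * k) ^ 2 * j ^ 2) := by gcongr
    _ ≤ c₄ * τ / h * ((h ^ 2) ^ 2 * (Ctr / h * g ^ 2)) := by gcongr
    _ = c₄ * Ctr * τ * (h * g) ^ 2 := by field_simp
    _ ≤ c₄ * Ctr * τ * (Cinv ^ 2 * v ^ 2) := by gcongr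
    _ = c₄ * Ctr * Cinv ^ 2 * τ * v ^ 2 := by ring

end TermBounds

/-- `Nv'`, `Ngrad`, `Nconv`, `Njump`, `Nau` stand for `‖v'‖`, `‖∇v'‖`, `‖a·∇v'‖`,
`‖[[∂ₙ v']]‖_{E_h}` and `‖a·∇u_h‖`, with `v' = P_h(a·∇u_h)`, and `na` for `|a|`. -/
theorem stmt_11_general (k s na h τK τE c₄ Cinv Ctr : ℝ)
    (Nv' Ngrad Nconv Njump Nau : ℝ)
    (hk : 0 ≤ k) (hs : 0 ≤ s) (hna : 0 ≤ na) (hh : 0 < h)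
    (hτK : 0 < τK) (hc₄ : 0 < c₄)
    (hCtr : 0 < Ctr)
    (hNv' : 0 ≤ Nv') (hNgrad : 0 ≤ Ngrad) (hNconv : 0 ≤ Nconv)
    (hinv : Ngrad ≤ Cinv / h * Nv')
    (hconv : Nconv ≤ na * Ngrad)
    (hjump : Njump ^ 2 ≤ Ctr / h * Ngrad ^ 2)
    (hstab : Nv' ≤ Nau)
    (hτ : τK * (k / h ^ 2 + na / h + s) ≤ 1)
    (hτE : τE ≤ c₄ * τK / h) :
    ∃ C > 0,
      k * τK ^ 2 * Ngrad ^ 2 + s * τK ^ 2 * Nv' ^ 2 + τK ^ 3 * Nconv ^ 2 +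
          τE * τK ^ 2 * k ^ 2 * Njump ^ 2 ≤ C * τK * Nau ^ 2 ∧
      k * τK ^ 2 * Ngrad ^ 2 + s * τK ^ 2 * Nv' ^ 2 + τK ^ 3 * Nconv ^ 2 ≤
          C * τK * Nau ^ 2 := by
  obtain ⟨hτk, hτa, hτs⟩ := stabilization_parameter_bounds hτK.le hk hna hs hh hτ
  have hgrad := sq_mul_le_of_inverse_estimate hh hNgrad hinv
  have hdiff := diffusion_term_le hτK.le hτk hgrad
  have hreac := reaction_term_le (v := Nv') hτK.le hτs
  have hconvec := convection_term_le hτK.le hNgrad hNconv hconv hτa hgrad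
  have hjmp := jump_term_le hτK.le hk hh hc₄.le hCtr.le hτE hτk hjump hgrad
  have hjump_coeff : 0 ≤ c₄ * Ctr * Cinv ^ 2 * τK * Nv' ^ 2 := by positivity
  have hproj : (2 * Cinv ^ 2 + 1 + c₄ * Ctr * Cinv ^ 2) * τK * Nv' ^ 2 ≤
      (2 * Cinv ^ 2 + 1 + c₄ * Ctr * Cinv ^ 2) * τK * Nau ^ 2 := by
    gcongr
  refine ⟨2 * Cinv ^ 2 + 1 + c₄ * Ctr * Cinv ^ 2, by positivity, ?_, ?_⟩ <;> linarith

/-- Estimate (conv-2): under the inverse estimate `‖∇v'‖ ≤ C_inv h⁻¹‖v'‖`, the edge/trace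
bound for jumps `‖[[∂ₙ v']]‖² ≤ C_tr h⁻¹‖∇v'‖²`, the bound `‖a·∇v'‖ ≤ |a|‖∇v'‖`, the
`L²`-projection stability `‖v'‖ = ‖P_h(a·∇u_h)‖ ≤ ‖a·∇u_h‖`, and the parameter bounds
`τ_K(k/h² + |a|/h + s) ≤ 1`, `τ_E ≤ c₄τ_K/h`, the auxiliary function `v⁰ = τ_K v'`
satisfies `kτ_K²‖∇v'‖² + sτ_K²‖v'‖² + τ_K³‖a·∇v'‖² + τ_Eτ_K²k²‖[[∂ₙ v']]‖² ≤ Cτ_K‖a·∇u_h‖²`;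
in particular its stabilized norm is bounded: `|||v⁰|||² ≤ Cτ_K‖a·∇u_h‖² `. -/
theorem stmt_11 (k s na h τK τE c₄ Cinv Ctr : ℝ)
    (Nv' Ngrad Nconv Njump Nau : ℝ)
    (hk : 0 ≤ k) (hs : 0 ≤ s) (hna : 0 ≤ na) (hh : 0 < h)
    (hτK : 0 < τK) (hτEpos : 0 < τE) (hc₄ : 0 < c₄)
    (hCinv : 0 < Cinv) (hCtr : 0 < Ctr)
    (hNv' : 0 ≤ Nv') (hNgrad : 0 ≤ Ngrad) (hNconv : 0 ≤ Nconv)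
    (hNjump : 0 ≤ Njump) (hNau : 0 ≤ Nau)
    (hinv : Ngrad ≤ Cinv / h * Nv')
    (hconv : Nconv ≤ na * Ngrad)
    (hjump : Njump ^ 2 ≤ Ctr / h * Ngrad ^ 2)
    (hstab : Nv' ≤ Nau)
    (hτ : τK * (k / h ^ 2 + na / h + s) ≤ 1)
    (hτE : τE ≤ c₄ * τK / h) :
    ∃ C > 0,
      k * τK ^ 2 * Ngrad ^ 2 + s * τK ^ 2 * Nv' ^ 2 + τK ^ 3 * Nconv ^ 2 +
          τE * τK ^ 2 * k ^ 2 * Njump ^ 2 ≤ C * τK * Nau ^ 2 ∧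
      k * τK ^ 2 * Ngrad ^ 2 + s * τK ^ 2 * Nv' ^ 2 + τK ^ 3 * Nconv ^ 2 ≤
          C * τK * Nau ^ 2 :=
  stmt_11_general k s na h τK τE c₄ Cinv Ctr Nv' Ngrad Nconv Njump Nau hk hs hna hh hτK hc₄ hCtr
    hNv' hNgrad hNconv hinv hconv hjump hstab hτ hτE
end

section
/- Let V be a normed space with seminorms |||·||| and η, ζ : V → ℝ≥0, and suppose: (coercivity up to interpolation error) |||e|||² − ζ² ≤ C₁·B_stab(e, Λ(e)); (consistency) B_stab(e, Λ(e)) = B(e, P^⊥e) + S(e, P^⊥e); and the continuity bounds B(e, P^⊥e) ≤ C₂ η |||P^⊥e||| and S(e, P^⊥e) ≤ C₃ η(|||P^⊥e||| + ζ), with |||P^⊥e||| ≤ |||e||| + C₄ζ. Then |||e||| ≤ C(η + ζ) for some constant C depending only on C₁,…,C₄. -/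
/-!
Inserting consistency and the two quasi-continuity bounds into quasi-coercivity, and then
the bound on `|||P^⊥e|||`, gives the quadratic inequality
`|||e|||² ≤ K η |||e||| + ζ² + M η ζ ≤ K η |||e||| + (ζ + M η / 2)²`, where
`K = C₁(C₂ + C₃)` and `M = K C₄ + C₁ C₃`.
A quadratic inequality `x² ≤ a x + c²` forces `x ≤ a + c`, which is the estimate with
`C = K + M / 2 + 1`.
-/

theorem le_add_of_sq_le_mul_add_sq {α : Type*} [Field α] [LinearOrder α] [IsStrictOrderedRing α]
    {x a c : α} (ha : 0 ≤ a) (hc : 0 ≤ c) (h : x ^ 2 ≤ a * x + c ^ 2) : x ≤ a + c := by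
  by_contra! hlt
  have hx : c ≤ x := by linarith
  nlinarith [mul_le_mul_of_nonneg_left hx hc]

theorem sq_le_of_quasiCoercive {C₁ C₂ C₃ C₄ e ζ η p B b s : ℝ}
    (hC₁ : 0 ≤ C₁) (hC₂₃ : 0 ≤ C₂ + C₃) (hη : 0 ≤ η)
    (hcoer : e ^ 2 - ζ ^ 2 ≤ C₁ * B) (hcons : B = b + s)
    (hb : b ≤ C₂ * η * p) (hs : s ≤ C₃ * η * (p + ζ)) (hp : p ≤ e + C₄ * ζ) :
    e ^ 2 ≤ C₁ * (C₂ + C₃) * η * e + (ζ ^ 2 + (C₁ * (C₂ + C₃) * C₄ + C₁ * C₃) * η * ζ) := by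
  have hB : B ≤ (C₂ + C₃) * η * (e + C₄ * ζ) + C₃ * η * ζ := by
    have := mul_le_mul_of_nonneg_left hp (mul_nonneg hC₂₃ hη)
    linarith
  nlinarith [mul_le_mul_of_nonneg_left hB hC₁]

/-- Abstract upper-bound half of the a posteriori error estimate in the stabilized norm:
if `|||e|||² − ζ² ≤ C₁ B_stab(e, Λe)` (quasi-coercivity), `B_stab(e, Λe) = B(e, P^⊥e) +
S(e, P^⊥e)` (consistency), `B(e, P^⊥e) ≤ C₂η|||P^⊥e|||`, `S(e, P^⊥e) ≤ C₃η(|||P^⊥e||| + ζ)`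
(quasi-continuity), and `|||P^⊥e||| ≤ |||e||| + C₄ζ`, then `|||e||| ≤ C(η + ζ)` for some
constant `C` depending only on `C₁, …, C₄`. -/
theorem stmt_19 (C₁ C₂ C₃ C₄ : ℝ)
    (hC₁ : 0 < C₁) (hC₂ : 0 < C₂) (hC₃ : 0 < C₃) (hC₄ : 0 < C₄) :
    ∃ C > 0, ∀ nrme ζ η nrmPe BΛ BPe SPe : ℝ,
      0 ≤ nrme → 0 ≤ ζ → 0 ≤ η → 0 ≤ nrmPe →
      nrme ^ 2 - ζ ^ 2 ≤ C₁ * BΛ →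
      BΛ = BPe + SPe →
      BPe ≤ C₂ * η * nrmPe →
      SPe ≤ C₃ * η * (nrmPe + ζ) →
      nrmPe ≤ nrme + C₄ * ζ →
      nrme ≤ C * (η + ζ) := by
  set K := C₁ * (C₂ + C₃)
  set M := K * C₄ + C₁ * C₃
  refine ⟨K + M / 2 + 1, by positivity, ?_⟩
  intro nrme ζ η nrmPe BΛ BPe SPe _ hζ hη _ hcoer hcons hB hS hPe
  have hquad : nrme ^ 2 ≤ K * η * nrme + (ζ ^ 2 + M * η * ζ) :=
    sq_le_of_quasiCoercive hC₁.le (by positivity) hη hcoer hcons hB hS hPe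
  have hsq : ζ ^ 2 + M * η * ζ ≤ (ζ + M / 2 * η) ^ 2 := by nlinarith [sq_nonneg (M / 2 * η)]
  have hle : nrme ≤ K * η + (ζ + M / 2 * η) :=
    le_add_of_sq_le_mul_add_sq (by positivity) (by positivity) (hquad.trans (by linarith))
  nlinarith [mul_nonneg (by positivity : 0 ≤ K + M / 2) hζ]
end
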